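/- The stationarity condition of the Newton iteration: θ* is a fixed point of the map θ ↦ K(Wθ + ∇_θ log π(y|θ)) − K W^{1/2}(I+W^{1/2}KW^{1/2})^{-1}W^{1/2}K(Wθ + ∇_θ log π(y|θ)) (with W = −∇²_θ log π(y|θ)) if and only if K^{-1}θ* = ∇_θ log π(y|θ*), i.e., θ* is a stationary point of the unnormalized log posterior. -/

import Mathlib

/-! With `S = W^{1/2}`, the Woodbury identity identifies the matrix `K - K S (I + S K S)⁻¹ S K` of
the Newton map with `(K⁻¹ + W)⁻¹`, which exists since `K⁻¹ + W` is positive definite. The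
fixed-point equation is therefore `W θ + g θ = (K⁻¹ + W) θ`, i.e. `g θ = K⁻¹ θ`. -/

open Matrix

namespace Matrix.PosSemidef

open scoped ComplexOrder

/-- The square root of a positive semidefinite matrix, as `Matrix.PosSemidef.sqrt` was defined
in the older Mathlib (removed since). -/
noncomputable def sqrt {𝕜 : Type*} [RCLike 𝕜] {n : Type*} [Fintype n] [DecidableEq n]
    {A : Matrix n n 𝕜} (hA : A.PosSemidef) : Matrix n n 𝕜 :=
  hA.1.eigenvectorUnitary.1 * diagonal ((↑) ∘ (fun x : ℝ => Real.sqrt x) ∘ hA.1.eigenvalues) *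
    (star hA.1.eigenvectorUnitary : Matrix n n 𝕜)

end Matrix.PosSemidef

namespace Matrix

namespace PosSemidef

open scoped ComplexOrder

variable {𝕜 : Type*} [RCLike 𝕜] {n : Type*} [Fintype n] [DecidableEq n] {A : Matrix n n 𝕜}

theorem sqrt_mul_self (hA : A.PosSemidef) : hA.sqrt * hA.sqrt = A := by
  set U : Matrix n n 𝕜 := hA.1.eigenvectorUnitary.1
  have hU : star U * U = 1 := Unitary.star_mul_self_of_mem hA.1.eigenvectorUnitary.2
  conv_rhs => rw [hA.1.spectral_theorem, Unitary.conjStarAlgAut_apply]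
  calc hA.sqrt * hA.sqrt
      = U * (diagonal ((↑) ∘ Real.sqrt ∘ hA.1.eigenvalues) * (star U * U) *
          diagonal ((↑) ∘ Real.sqrt ∘ hA.1.eigenvalues)) * star U := by
        simp only [sqrt, U, mul_assoc]
    _ = U * diagonal ((↑) ∘ hA.1.eigenvalues) * star U := by
        rw [hU, mul_one, diagonal_mul_diagonal]
        congr 3
        funext i
        simp [← RCLike.ofReal_mul, Real.mul_self_sqrt (hA.eigenvalues_nonneg i)]

theorem conjTranspose_sqrt (hA : A.PosSemidef) : hA.sqrtᴴ = hA.sqrt := by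
  simp [sqrt, conjTranspose_mul, mul_assoc, star_eq_conjTranspose, Pi.star_def, Function.comp_def]

end PosSemidef

variable {n : Type*} [Fintype n] [DecidableEq n] {α : Type*} [CommRing α]

theorem inv_mulVec_eq_iff {A : Matrix n n α} (hA : IsUnit A) {u v : n → α} :
    A⁻¹ *ᵥ u = v ↔ u = A *ᵥ v := by
  have hdet := (isUnit_iff_isUnit_det A).mp hA
  constructor
  · rintro rfl
    rw [mulVec_mulVec, mul_nonsing_inv A hdet, one_mulVec]
  · rintro rfl
    rw [mulVec_mulVec, nonsing_inv_mul A hdet, one_mulVec]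

theorem inv_inv_add_mul_self {K S : Matrix n n α} (hK : IsUnit K) (h : IsUnit (1 + S * K * S)) :
    (K⁻¹ + S * S)⁻¹ = K - K * S * (1 + S * K * S)⁻¹ * S * K := by
  have hKK : K⁻¹⁻¹ = K := nonsing_inv_nonsing_inv K ((isUnit_iff_isUnit_det K).mp hK)
  have := add_mul_mul_inv_eq_sub K⁻¹ S 1 S (isUnit_nonsing_inv_iff.mpr hK) isUnit_one
    (by rwa [inv_one, hKK])
  rwa [mul_one, hKK, inv_one] at this

end Matrix

/-- Stationarity of the Newton iteration: `θ*` is a fixed point of the Newton map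
`θ ↦ K(Wθ + g(θ)) − K W^{1/2}(I + W^{1/2} K W^{1/2})⁻¹ W^{1/2} K (Wθ + g(θ))`
(with `W = −∇²_θ log π(y|θ*)` and `g = ∇_θ log π(y|·)`) if and only if
`K⁻¹ θ* = g(θ*)`, i.e. `θ*` is a stationary point of the unnormalized log posterior. -/
theorem newton_fixed_point_iff_stationary (n : ℕ)
    (K W : Matrix (Fin n) (Fin n) ℝ) (hK : K.PosDef) (hW : W.PosSemidef)
    (g : (Fin n → ℝ) → (Fin n → ℝ)) (θstar : Fin n → ℝ)
    (b : Fin n → ℝ) (hb : b = W.mulVec θstar + g θstar) :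
    K.mulVec b -
        (K * hW.sqrt * (1 + hW.sqrt * K * hW.sqrt)⁻¹ * hW.sqrt * K).mulVec b =
        θstar ↔
      K⁻¹.mulVec θstar = g θstar := by
  have hSKS : (hW.sqrt * K * hW.sqrt).PosSemidef := by
    simpa only [hW.conjTranspose_sqrt] using hK.posSemidef.conjTranspose_mul_mul_same hW.sqrt
  have hA : (1 + hW.sqrt * K * hW.sqrt).PosDef := PosDef.one.add_posSemidef hSKS
  have hN : (K⁻¹ + W).PosDef := hK.inv.add_posSemidef hW
  rw [← sub_mulVec, ← inv_inv_add_mul_self hK.isUnit hA.isUnit, hW.sqrt_mul_self,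
    inv_mulVec_eq_iff hN.isUnit, hb, add_mulVec, add_comm (K⁻¹ *ᵥ θstar), add_left_cancel_iff,
    eq_comm]
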